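/- Barycenter one-step estimation error bound: let Σ_1,…,Σ_K and Σ̂_1,…,Σ̂_K be symmetric positive definite, set Σ̄_0 = (1/K)Σ_k Σ_k, Σ̂̄_0 = (1/K)Σ_k Σ̂_k, Σ̄_1 = (1/K)Σ_k (Σ̄_0^{1/2} Σ_k Σ̄_0^{1/2})^{1/2}, and Σ̂̄_1 defined analogously with hats. Then ‖Σ̂̄_1 − Σ̄_1‖ ≤ (1/K) Σ_k (1/ξ_k) [ ‖Σ̂_k‖ (‖Σ̂̄_0^{1/2}‖ + ‖Σ̄_0^{1/2}‖) ‖Σ̂̄_0^{1/2} − Σ̄_0^{1/2}‖ + ‖Σ̄_0‖ ‖Σ̂_k − Σ_k‖ ], where ξ_k = λ_min^{1/2}(Σ̄_0^{1/2} Σ_k Σ̄_0^{1/2}). -/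

import Mathlib

open Matrix
open scoped Matrix.Norms.L2Operator

/-- The (unique) positive semidefinite square root, extended by `0` to all matrices. -/
noncomputable def sqrtm {m : Type*} [Fintype m] [DecidableEq m]
    (A : Matrix m m ℝ) : Matrix m m ℝ :=
  open scoped Classical in
  if h : A.PosSemidef then
    (h.1.eigenvectorUnitary : Matrix m m ℝ) *
      diagonal (RCLike.ofReal ∘ Real.sqrt ∘ h.1.eigenvalues) *
      (star h.1.eigenvectorUnitary : Matrix m m ℝ)
  else 0

/-- The smallest eigenvalue of a Hermitian matrix (junk value `0` otherwise). -/
noncomputable def lmin {m : Type*} [Fintype m] [DecidableEq m] (A : Matrix m m ℝ) : ℝ :=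
  open scoped Classical in
  if h : A.IsHermitian then ⨅ i, h.eigenvalues i else 0

section Aux

variable {n : ℕ}

noncomputable def Matrix.PosSemidef.sqrt {A : Matrix (Fin n) (Fin n) ℝ} (h : A.PosSemidef) :
    Matrix (Fin n) (Fin n) ℝ :=
  (h.1.eigenvectorUnitary : Matrix (Fin n) (Fin n) ℝ) *
    diagonal (RCLike.ofReal ∘ Real.sqrt ∘ h.1.eigenvalues) *
    (star h.1.eigenvectorUnitary : Matrix (Fin n) (Fin n) ℝ)

lemma Matrix.PosSemidef.posSemidef_sqrt {A : Matrix (Fin n) (Fin n) ℝ} (h : A.PosSemidef) :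
    h.sqrt.PosSemidef := by
  unfold Matrix.PosSemidef.sqrt
  rw [star_eq_conjTranspose]
  exact (posSemidef_diagonal_iff.mpr fun i => by simp [Real.sqrt_nonneg]).mul_mul_conjTranspose_same _

lemma conj_sq_aux (U D E : Matrix (Fin n) (Fin n) ℝ) (hU : star U * U = 1) (hD : D * D = E) :
    U * D * star U * (U * D * star U) = U * E * star U := by
  rw [← hD]
  simp only [mul_assoc]
  rw [← mul_assoc (star U) U, hU, one_mul]

lemma Matrix.PosSemidef.sqrt_mul_self {A : Matrix (Fin n) (Fin n) ℝ} (h : A.PosSemidef) :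
    h.sqrt * h.sqrt = A := by
  unfold Matrix.PosSemidef.sqrt
  conv_rhs => rw [h.1.spectral_theorem, Unitary.conjStarAlgAut_apply]
  refine conj_sq_aux _ _ _ ((Matrix.mem_unitaryGroup_iff').mp h.1.eigenvectorUnitary.2) ?_
  rw [diagonal_mul_diagonal]
  congr 1
  funext i
  simp [Real.mul_self_sqrt (h.eigenvalues_nonneg i)]

lemma sqrtm_of_posSemidef {A : Matrix (Fin n) (Fin n) ℝ} (h : A.PosSemidef) :
    sqrtm A = h.sqrt := dif_pos h

lemma lmin_of_isHermitian {A : Matrix (Fin n) (Fin n) ℝ} (h : A.IsHermitian) :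
    lmin A = ⨅ i, h.eigenvalues i := dif_pos h

lemma euclid_dot (x y : EuclideanSpace ℝ (Fin n)) : ⇑x ⬝ᵥ ⇑y = (inner ℝ x y : ℝ) := by
  simp [dotProduct, PiLp.inner_apply, mul_comm]

-- M hermitian, c below all eigenvalues ⇒ M - c•1 PSD
lemma posSemidef_sub_smul_one {M : Matrix (Fin n) (Fin n) ℝ} (hM : M.IsHermitian)
    {c : ℝ} (hc : ∀ i, c ≤ hM.eigenvalues i) :
    (M - c • (1 : Matrix (Fin n) (Fin n) ℝ)).PosSemidef := by
  have hU := (Matrix.mem_unitaryGroup_iff).mp hM.eigenvectorUnitary.2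
  have key : M - c • (1 : Matrix (Fin n) (Fin n) ℝ) =
      (hM.eigenvectorUnitary : Matrix (Fin n) (Fin n) ℝ) *
        diagonal (fun i => hM.eigenvalues i - c) *
        star (hM.eigenvectorUnitary : Matrix (Fin n) (Fin n) ℝ) := by
    have h1 : (diagonal (fun i => hM.eigenvalues i - c) : Matrix (Fin n) (Fin n) ℝ)
        = diagonal (RCLike.ofReal ∘ hM.eigenvalues) - c • 1 := by
      simp [diagonal_sub, smul_eq_diagonal_mul]
    have hsp := hM.spectral_theorem
    rw [Unitary.conjStarAlgAut_apply] at hsp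
    rw [h1, mul_sub, sub_mul, ← hsp]
    congr 1
    rw [mul_smul_comm, smul_mul_assoc, mul_one, hU]
  rw [key, star_eq_conjTranspose]
  exact (posSemidef_diagonal_iff.mpr fun i => sub_nonneg.2 (hc i)).mul_mul_conjTranspose_same _

lemma rayleigh_lower {M : Matrix (Fin n) (Fin n) ℝ} (hM : M.IsHermitian)
    {c : ℝ} (hc : ∀ i, c ≤ hM.eigenvalues i) (v : Fin n → ℝ) :
    c * (v ⬝ᵥ v) ≤ v ⬝ᵥ M *ᵥ v := by
  have h := (posSemidef_sub_smul_one hM hc).dotProduct_mulVec_nonneg v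
  simp only [star_trivial, sub_mulVec, smul_mulVec, one_mulVec, dotProduct_sub,
    dotProduct_smul, smul_eq_mul, sub_nonneg] at h
  exact h

lemma lmin_le_eigenvalues {A : Matrix (Fin n) (Fin n) ℝ} (h : A.IsHermitian) (i : Fin n) :
    lmin A ≤ h.eigenvalues i := by
  rw [lmin_of_isHermitian h]
  exact ciInf_le (Finite.bddBelow_range _) i

lemma lmin_pos [Nonempty (Fin n)] {A : Matrix (Fin n) (Fin n) ℝ} (hA : A.PosDef) :
    0 < lmin A := by
  rw [lmin_of_isHermitian hA.1]
  obtain ⟨i, hi⟩ := exists_eq_ciInf_of_finite (f := hA.1.eigenvalues)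
  rw [← hi]
  exact hA.eigenvalues_pos i

lemma posDef_of_sq {B : Matrix (Fin n) (Fin n) ℝ} (hB : B.PosSemidef)
    (hBB : (B * B).PosDef) : B.PosDef := by
  refine PosDef.of_dotProduct_mulVec_pos hB.1 fun x hx => ?_
  rcases lt_or_eq_of_le (hB.dotProduct_mulVec_nonneg x) with h | h
  · exact h
  · exfalso
    have h0 : B *ᵥ x = 0 := (hB.dotProduct_mulVec_zero_iff x).mp h.symm
    have := hBB.dotProduct_mulVec_pos hx
    rw [← mulVec_mulVec, h0, mulVec_zero, dotProduct_zero] at this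
    exact lt_irrefl 0 this

lemma sqrtm_posDef {Y : Matrix (Fin n) (Fin n) ℝ} (hY : Y.PosDef) : (sqrtm Y).PosDef := by
  rw [sqrtm_of_posSemidef hY.posSemidef]
  refine posDef_of_sq hY.posSemidef.posSemidef_sqrt ?_
  rw [hY.posSemidef.sqrt_mul_self]
  exact hY

lemma sqrtm_sub_smul_one_posSemidef [Nonempty (Fin n)]
    {Y : Matrix (Fin n) (Fin n) ℝ} (hY : Y.PosDef) :
    (sqrtm Y - Real.sqrt (lmin Y) • (1 : Matrix (Fin n) (Fin n) ℝ)).PosSemidef := by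
  have hB : (sqrtm Y).PosSemidef := (sqrtm_posDef hY).posSemidef
  refine posSemidef_sub_smul_one hB.1 fun j => ?_
  -- √(lmin Y) ≤ eigenvalue j of sqrtm Y
  set t := hB.1.eigenvalues j with ht
  have ht0 : 0 ≤ t := hB.eigenvalues_nonneg j
  set w : Fin n → ℝ := ⇑(hB.1.eigenvectorBasis j) with hw
  have hBw : sqrtm Y *ᵥ w = t • w := hB.1.mulVec_eigenvectorBasis j
  have hYw : Y *ᵥ w = (t^2) • w := by
    have : sqrtm Y * sqrtm Y = Y := by
      rw [sqrtm_of_posSemidef hY.posSemidef]; exact hY.posSemidef.sqrt_mul_self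
    rw [← this, ← mulVec_mulVec, hBw, mulVec_smul, hBw, smul_smul, sq]
  have hw1 : w ⬝ᵥ w = 1 := by
    rw [hw, euclid_dot, real_inner_self_eq_norm_sq, hB.1.eigenvectorBasis.orthonormal.1 j]
    norm_num
  have hray := rayleigh_lower hY.1 (fun i => lmin_le_eigenvalues hY.1 i) w
  rw [hw1, mul_one, hYw, dotProduct_smul, smul_eq_mul, hw1, mul_one] at hray
  calc Real.sqrt (lmin Y) ≤ Real.sqrt (t^2) := Real.sqrt_le_sqrt hray
    _ = t := Real.sqrt_sq ht0

lemma l2_opNorm_diagonal_le {d : Fin n → ℝ} {c : ℝ} (hc : 0 ≤ c) (h : ∀ i, |d i| ≤ c) :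
    ‖diagonal d‖ ≤ c := by
  rw [cstar_norm_def]
  refine ContinuousLinearMap.opNorm_le_bound _ hc fun x => ?_
  have hx : ∀ y : EuclideanSpace ℝ (Fin n), ‖y‖ = Real.sqrt (∑ i, (y i)^2) := by
    intro y; rw [EuclideanSpace.norm_eq]; simp only [Real.norm_eq_abs, sq_abs]
  have h1 : ⇑((toEuclideanCLM (𝕜 := ℝ) (n := Fin n)) (diagonal d) x)
      = fun i => d i * x i := by
    rw [ofLp_toEuclideanCLM]
    funext i
    simp [mulVec_diagonal]
  rw [hx, hx, ← Real.sqrt_sq hc, ← Real.sqrt_mul (by positivity)]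
  refine Real.sqrt_le_sqrt ?_
  rw [Finset.mul_sum]
  refine Finset.sum_le_sum fun i _ => ?_
  have h2 : ((toEuclideanCLM (𝕜 := ℝ) (n := Fin n)) (diagonal d) x) i = d i * x i :=
    congrFun h1 i
  rw [h2, mul_pow]
  have : (d i)^2 ≤ c^2 := by
    have := h i; nlinarith [abs_nonneg (d i), sq_abs (d i)]
  nlinarith [sq_nonneg (x i)]

lemma l2_opNorm_isHermitian_le {D : Matrix (Fin n) (Fin n) ℝ} (hD : D.IsHermitian)
    {c : ℝ} (hc : 0 ≤ c) (h : ∀ i, |hD.eigenvalues i| ≤ c) : ‖D‖ ≤ c := by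
  conv_lhs => rw [hD.spectral_theorem, Unitary.conjStarAlgAut_apply]
  rw [mul_assoc, CStarRing.norm_coe_unitary_mul,
    CStarRing.norm_mul_mem_unitary _ (Unitary.star_mem hD.eigenvectorUnitary.2)]
  exact l2_opNorm_diagonal_le hc (by simpa using h)

lemma sqrt_perturb [Nonempty (Fin n)] {X Y : Matrix (Fin n) (Fin n) ℝ}
    (hX : X.PosSemidef) (hY : Y.PosDef) :
    ‖sqrtm X - sqrtm Y‖ * Real.sqrt (lmin Y) ≤ ‖X - Y‖ := by
  set A := sqrtm X with hA'
  set B := sqrtm Y with hB'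
  have hA : A.PosSemidef := by rw [hA', sqrtm_of_posSemidef hX]; exact hX.posSemidef_sqrt
  have hB : B.PosSemidef := (sqrtm_posDef hY).posSemidef
  have hAA : A * A = X := by rw [hA', sqrtm_of_posSemidef hX]; exact hX.sqrt_mul_self
  have hBB : B * B = Y := by
    rw [hB', sqrtm_of_posSemidef hY.posSemidef]; exact hY.posSemidef.sqrt_mul_self
  set c := Real.sqrt (lmin Y) with hc'
  have hc0 : 0 ≤ c := Real.sqrt_nonneg _
  have hD : (A - B).IsHermitian := hA.1.sub hB.1
  obtain ⟨i, hi⟩ := Finite.exists_max (fun j => |hD.eigenvalues j|)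
  set μ := hD.eigenvalues i with hμ'
  set v : Fin n → ℝ := ⇑(hD.eigenvectorBasis i) with hv'
  have hDnorm : ‖A - B‖ ≤ |μ| := l2_opNorm_isHermitian_le hD (abs_nonneg _) hi
  have hv1 : v ⬝ᵥ v = 1 := by
    rw [hv', euclid_dot, real_inner_self_eq_norm_sq, hD.eigenvectorBasis.orthonormal.1 i]
    norm_num
  have hDv : (A - B) *ᵥ v = μ • v := hD.mulVec_eigenvectorBasis i
  have hXY : X - Y = A * (A - B) + (A - B) * B := by
    rw [mul_sub, sub_mul, hAA, hBB]; abel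
  have hsym : (A - B)ᵀ = A - B := by
    have := hD.eq
    rwa [conjTranspose_eq_transpose_of_trivial] at this
  have hq : v ⬝ᵥ (X - Y) *ᵥ v = μ * (v ⬝ᵥ A *ᵥ v + v ⬝ᵥ B *ᵥ v) := by
    rw [hXY, add_mulVec, dotProduct_add, ← mulVec_mulVec, hDv, mulVec_smul, dotProduct_smul,
      ← mulVec_mulVec, dotProduct_mulVec v (A - B), ← mulVec_transpose, hsym, hDv,
      smul_dotProduct]
    simp [smul_eq_mul]
    ring
  have hqA : 0 ≤ v ⬝ᵥ A *ᵥ v := by simpa using hA.dotProduct_mulVec_nonneg v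
  have hqB : c ≤ v ⬝ᵥ B *ᵥ v := by
    have h := (sqrtm_sub_smul_one_posSemidef hY).dotProduct_mulVec_nonneg v
    simp only [star_trivial, sub_mulVec, smul_mulVec, one_mulVec, dotProduct_sub,
      dotProduct_smul, smul_eq_mul, sub_nonneg, ← hB', ← hc'] at h
    rwa [hv1, mul_one] at h
  -- |v ⬝ᵥ (X-Y) v| ≤ ‖X - Y‖
  have hcs : |v ⬝ᵥ (X - Y) *ᵥ v| ≤ ‖X - Y‖ := by
    set x : EuclideanSpace ℝ (Fin n) := hD.eigenvectorBasis i with hx'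
    have hxnorm : ‖x‖ = 1 := hD.eigenvectorBasis.orthonormal.1 i
    have h1 : v ⬝ᵥ (X - Y) *ᵥ v
        = (inner ℝ x ((EuclideanSpace.equiv (Fin n) ℝ).symm ((X - Y) *ᵥ v)) : ℝ) := by
      rw [← euclid_dot]
      rfl
    rw [h1]
    calc |(inner ℝ x ((EuclideanSpace.equiv (Fin n) ℝ).symm ((X - Y) *ᵥ v)) : ℝ)|
        ≤ ‖x‖ * ‖(EuclideanSpace.equiv (Fin n) ℝ).symm ((X - Y) *ᵥ v)‖ :=
          abs_real_inner_le_norm _ _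
      _ ≤ ‖x‖ * (‖X - Y‖ * ‖x‖) := by
          gcongr
          exact l2_opNorm_mulVec (X - Y) x
      _ = ‖X - Y‖ := by rw [hxnorm]; ring
  calc ‖A - B‖ * c ≤ |μ| * c := by gcongr
    _ ≤ |μ| * (v ⬝ᵥ A *ᵥ v + v ⬝ᵥ B *ᵥ v) := by
        refine mul_le_mul_of_nonneg_left ?_ (abs_nonneg _)
        linarith
    _ = |μ * (v ⬝ᵥ A *ᵥ v + v ⬝ᵥ B *ᵥ v)| := by
        rw [abs_mul, abs_of_nonneg (by linarith : (0:ℝ) ≤ v ⬝ᵥ A *ᵥ v + v ⬝ᵥ B *ᵥ v)]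
    _ = |v ⬝ᵥ (X - Y) *ᵥ v| := by rw [hq]
    _ ≤ ‖X - Y‖ := hcs

lemma posDef_smul {M : Matrix (Fin n) (Fin n) ℝ} (hM : M.PosDef) {c : ℝ} (hc : 0 < c) :
    (c • M).PosDef := by
  refine PosDef.of_dotProduct_mulVec_pos ?_ fun x hx => ?_
  · unfold Matrix.IsHermitian
    rw [conjTranspose_smul, hM.1.eq]
    simp
  · have := hM.dotProduct_mulVec_pos hx
    simp only [smul_mulVec, dotProduct_smul, smul_eq_mul]
    positivity

lemma posDef_sum {K : ℕ} (hK : 0 < K) (S : Fin K → Matrix (Fin n) (Fin n) ℝ)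
    (hS : ∀ k, (S k).PosDef) : (∑ k, S k).PosDef := by
  haveI : Nonempty (Fin K) := ⟨⟨0, hK⟩⟩
  refine PosDef.of_dotProduct_mulVec_pos ?_ fun x hx => ?_
  · unfold Matrix.IsHermitian
    rw [conjTranspose_sum]
    exact Finset.sum_congr rfl fun k _ => (hS k).1.eq
  · have hsum : (∑ k, S k) *ᵥ x = ∑ k, S k *ᵥ x := by
      funext i
      simp [mulVec, dotProduct, Finset.sum_apply, Finset.sum_mul]
      rw [Finset.sum_comm]
      exact Finset.sum_congr rfl fun j _ => by
        rw [Matrix.sum_apply, Finset.sum_mul]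
    have hdot : star x ⬝ᵥ ∑ k, S k *ᵥ x = ∑ k, star x ⬝ᵥ S k *ᵥ x := by
      simp only [dotProduct, Finset.sum_apply, Finset.mul_sum]
      rw [Finset.sum_comm]
    rw [hsum, hdot]
    exact Finset.sum_pos (fun k _ => (hS k).dotProduct_mulVec_pos hx) Finset.univ_nonempty

lemma posDef_conj {R M : Matrix (Fin n) (Fin n) ℝ} (hR : R.PosDef) (hM : M.PosDef) :
    (R * M * R).PosDef := by
  have hRsym : Rᵀ = R := by
    have := hR.1.eq; rwa [conjTranspose_eq_transpose_of_trivial] at this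
  refine PosDef.of_dotProduct_mulVec_pos ?_ fun x hx => ?_
  · unfold Matrix.IsHermitian
    rw [conjTranspose_mul, conjTranspose_mul, hR.1.eq, hM.1.eq, mul_assoc]
  · have hy : R *ᵥ x ≠ 0 := by
      intro h0
      have := hR.dotProduct_mulVec_pos hx
      rw [h0, dotProduct_zero] at this
      exact lt_irrefl 0 this
    have key : star x ⬝ᵥ (R * M * R) *ᵥ x = star (R *ᵥ x) ⬝ᵥ M *ᵥ (R *ᵥ x) := by
      simp only [star_trivial, ← mulVec_mulVec]
      rw [dotProduct_mulVec x R, ← mulVec_transpose, hRsym]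
    rw [key]
    exact hM.dotProduct_mulVec_pos hy

lemma norm3 (A B C : Matrix (Fin n) (Fin n) ℝ) : ‖A * B * C‖ ≤ ‖A‖ * ‖B‖ * ‖C‖ :=
  (l2_opNorm_mul _ _).trans (mul_le_mul_of_nonneg_right (l2_opNorm_mul _ _) (norm_nonneg _))

end Aux

/-- One-step barycenter estimation error bound. -/
theorem barycenter_one_step_error_bound {n K : ℕ} (hK : 0 < K)
    (S Shat : Fin K → Matrix (Fin n) (Fin n) ℝ)
    (hS : ∀ k, (S k).PosDef) (hShat : ∀ k, (Shat k).PosDef) :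
    let S0 : Matrix (Fin n) (Fin n) ℝ := (1 / K : ℝ) • ∑ k, S k
    let S0hat : Matrix (Fin n) (Fin n) ℝ := (1 / K : ℝ) • ∑ k, Shat k
    let S1 : Matrix (Fin n) (Fin n) ℝ :=
      (1 / K : ℝ) • ∑ k, sqrtm (sqrtm S0 * S k * sqrtm S0)
    let S1hat : Matrix (Fin n) (Fin n) ℝ :=
      (1 / K : ℝ) • ∑ k, sqrtm (sqrtm S0hat * Shat k * sqrtm S0hat)
    let ξ : Fin K → ℝ := fun k => Real.sqrt (lmin (sqrtm S0 * S k * sqrtm S0))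
    ‖S1hat - S1‖ ≤ (1 / K : ℝ) * ∑ k, (1 / ξ k) *
      (‖Shat k‖ * (‖sqrtm S0hat‖ + ‖sqrtm S0‖) * ‖sqrtm S0hat - sqrtm S0‖ +
        ‖S0‖ * ‖Shat k - S k‖) := by
  intro S0 S0hat S1 S1hat ξ
  rcases Nat.eq_zero_or_pos n with hn | hn
  · subst hn
    have hz : ∀ M : Matrix (Fin 0) (Fin 0) ℝ, ‖M‖ = 0 := fun M => by
      rw [Subsingleton.elim M 0, norm_zero]
    simp only [hz, zero_add, add_zero, mul_zero, zero_mul, Finset.sum_const_zero]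
    positivity
  haveI : Nonempty (Fin n) := ⟨⟨0, hn⟩⟩
  have hK0 : (0:ℝ) < K := by exact_mod_cast hK
  have hS0 : S0.PosDef := posDef_smul (posDef_sum hK S hS) (by positivity)
  have hS0hat : S0hat.PosDef := posDef_smul (posDef_sum hK Shat hShat) (by positivity)
  have hR : (sqrtm S0).PosDef := sqrtm_posDef hS0
  have hRhat : (sqrtm S0hat).PosDef := sqrtm_posDef hS0hat
  have hA : ∀ k, (sqrtm S0 * S k * sqrtm S0).PosDef := fun k => posDef_conj hR (hS k)
  have hAhat : ∀ k, (sqrtm S0hat * Shat k * sqrtm S0hat).PosSemidef :=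
    fun k => (posDef_conj hRhat (hShat k)).posSemidef
  have hξ : ∀ k, 0 < ξ k := fun k => Real.sqrt_pos.mpr (lmin_pos (hA k))
  have hRR : ‖sqrtm S0‖ * ‖sqrtm S0‖ = ‖S0‖ := by
    conv_rhs => rw [show S0 = (sqrtm S0)ᴴ * sqrtm S0 by
      rw [hR.1.eq, sqrtm_of_posSemidef hS0.posSemidef, hS0.posSemidef.sqrt_mul_self]]
    rw [l2_opNorm_conjTranspose_mul_self]
  have key : ∀ k, ‖sqrtm (sqrtm S0hat * Shat k * sqrtm S0hat) -
      sqrtm (sqrtm S0 * S k * sqrtm S0)‖ ≤ (1 / ξ k) *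
      (‖Shat k‖ * (‖sqrtm S0hat‖ + ‖sqrtm S0‖) * ‖sqrtm S0hat - sqrtm S0‖ +
        ‖S0‖ * ‖Shat k - S k‖) := by
    intro k
    have h1 := sqrt_perturb (hAhat k) (hA k)
    have split : sqrtm S0hat * Shat k * sqrtm S0hat - sqrtm S0 * S k * sqrtm S0 =
        (sqrtm S0hat - sqrtm S0) * Shat k * sqrtm S0hat +
        sqrtm S0 * Shat k * (sqrtm S0hat - sqrtm S0) +
        sqrtm S0 * (Shat k - S k) * sqrtm S0 := by noncomm_ring
    have h2 : ‖sqrtm S0hat * Shat k * sqrtm S0hat - sqrtm S0 * S k * sqrtm S0‖ ≤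
        ‖Shat k‖ * (‖sqrtm S0hat‖ + ‖sqrtm S0‖) * ‖sqrtm S0hat - sqrtm S0‖ +
        ‖S0‖ * ‖Shat k - S k‖ := by
      rw [split]
      calc ‖_ + _ + _‖ ≤ ‖(sqrtm S0hat - sqrtm S0) * Shat k * sqrtm S0hat‖ +
            ‖sqrtm S0 * Shat k * (sqrtm S0hat - sqrtm S0)‖ +
            ‖sqrtm S0 * (Shat k - S k) * sqrtm S0‖ :=
          (norm_add_le _ _).trans (by gcongr; exact norm_add_le _ _)
        _ ≤ ‖sqrtm S0hat - sqrtm S0‖ * ‖Shat k‖ * ‖sqrtm S0hat‖ +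
            ‖sqrtm S0‖ * ‖Shat k‖ * ‖sqrtm S0hat - sqrtm S0‖ +
            ‖sqrtm S0‖ * ‖Shat k - S k‖ * ‖sqrtm S0‖ := by
          gcongr <;> exact norm3 _ _ _
        _ = ‖Shat k‖ * (‖sqrtm S0hat‖ + ‖sqrtm S0‖) * ‖sqrtm S0hat - sqrtm S0‖ +
            (‖sqrtm S0‖ * ‖sqrtm S0‖) * ‖Shat k - S k‖ := by ring
        _ = _ := by rw [hRR]
    have hξk := hξ k
    calc ‖sqrtm (sqrtm S0hat * Shat k * sqrtm S0hat) - sqrtm (sqrtm S0 * S k * sqrtm S0)‖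
        = (‖sqrtm (sqrtm S0hat * Shat k * sqrtm S0hat) -
            sqrtm (sqrtm S0 * S k * sqrtm S0)‖ * ξ k) / ξ k := by
          field_simp
      _ ≤ (‖Shat k‖ * (‖sqrtm S0hat‖ + ‖sqrtm S0‖) * ‖sqrtm S0hat - sqrtm S0‖ +
            ‖S0‖ * ‖Shat k - S k‖) / ξ k := by
          gcongr
          exact h1.trans h2
      _ = _ := by ring
  have hrw : S1hat - S1 = (1/K:ℝ) • ∑ k, (sqrtm (sqrtm S0hat * Shat k * sqrtm S0hat) -
      sqrtm (sqrtm S0 * S k * sqrtm S0)) := by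
    simp only [S1, S1hat]
    rw [← smul_sub, ← Finset.sum_sub_distrib]
  rw [hrw, norm_smul, Real.norm_eq_abs, abs_of_nonneg (by positivity)]
  refine mul_le_mul_of_nonneg_left ?_ (by positivity)
  exact (norm_sum_le _ _).trans (Finset.sum_le_sum fun k _ => key k)
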